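/- arXiv:math/0302059 — 2 statements merged into one kernel-verified Lean document; each statement's English description precedes it below -/
import Mathlib

section
/- Suppose X : ℕ → Fin m contains n consecutive occurrences of the basic color sequence b_m = (0,1,...,m−1), the i-th starting at index τ_i, with τ_1 ≤ k−1 and τ_{i+1} − m − τ_i ≤ k−1 for all 1 ≤ i ≤ n; and suppose Y : ℕ → Fin m has k consecutive repetitions of the reversed sequence b'_m starting at index n−1. Then there is no infinite directed path from (0,0) in ℕ² consisting of rightward and upward unit steps avoiding all blocked points, where (i,j) is blocked iff X(i) = Y(j). -/
/-!
Crossing a vertical band of columns coloured `0, 1, …, m - 1` forces the row colours to drop by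
at least two somewhere along the crossing: as long as no such drop is met, the colour of the
current row stays above the offset of the current column within the band. Transposing the picture
and reversing the colours, crossing a horizontal block `m - 1, …, 0` of `Y` forces `X` to rise by
at least two. Inside its `k` reversed blocks `Y` has no such drop, and inside an occurrence of
`b_m` the sequence `X` has no such rise.

Crossing `ℓ` bands forces a drop at height at least `ℓ`, so the path cannot cross all `n + 1`
bands below the top of the blocks of `Y`; hence it crosses the `k` blocks, producing `k` distinct
rise columns. No whole band lies between two of them, since it would be crossed within the blocks
of `Y`. So they all lie before the first occurrence or between two consecutive ones (not after
the last, since the first of them is reached below the top of the blocks), and each of these gaps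
has fewer than `k` admissible columns.
-/

/-- An infinite directed path in ℕ²: starts at (0,0) and each step increases
exactly one coordinate by 1. -/
def IsDirPath (p : ℕ → ℕ × ℕ) : Prop :=
  p 0 = (0, 0) ∧
    ∀ n, p (n + 1) = ((p n).1 + 1, (p n).2) ∨ p (n + 1) = ((p n).1, (p n).2 + 1)

theorem intermediate_value_of_succ_le_add_one {f : ℕ → ℕ} (hf : ∀ t, f (t + 1) ≤ f t + 1)
    {t₁ t₂ v : ℕ} (ht : t₁ ≤ t₂) (h₁ : f t₁ ≤ v) (h₂ : v ≤ f t₂) :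
    ∃ t, t₁ ≤ t ∧ t ≤ t₂ ∧ f t = v := by
  induction t₂, ht using Nat.le_induction with
  | base => exact ⟨t₁, le_rfl, le_rfl, by omega⟩
  | succ t₂ ht ih =>
    by_cases hv : v ≤ f t₂
    · obtain ⟨t, h, h', rfl⟩ := ih hv
      exact ⟨t, h, by omega, rfl⟩
    · exact ⟨t₂ + 1, by omega, le_rfl, by have := hf t₂; omega⟩

-- `0` when `f` never reaches `v`, since `sInf ∅ = 0`.
noncomputable def hitTime (f : ℕ → ℕ) (v : ℕ) : ℕ := sInf {t | v ≤ f t}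

section hitTime

variable {f : ℕ → ℕ} {v w t : ℕ}

theorem le_apply_hitTime (h : ∃ t, v ≤ f t) : v ≤ f (hitTime f v) :=
  Nat.sInf_mem h

theorem apply_lt_of_lt_hitTime (ht : t < hitTime f v) : f t < v :=
  not_le.1 (Nat.notMem_of_lt_sInf (s := {t | v ≤ f t}) ht)

theorem hitTime_mono (hvw : v ≤ w) (h : ∃ t, w ≤ f t) : hitTime f v ≤ hitTime f w :=
  Nat.sInf_le (hvw.trans (le_apply_hitTime h))

theorem apply_hitTime_le (hf : ∀ t, f (t + 1) ≤ f t + 1) (h₀ : f 0 ≤ v) :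
    f (hitTime f v) ≤ v := by
  rcases Nat.eq_zero_or_pos (hitTime f v) with h | h
  · rwa [h]
  · have := apply_lt_of_lt_hitTime (Nat.sub_one_lt_of_lt h)
    have := hf (hitTime f v - 1)
    rw [Nat.sub_add_cancel h] at this
    omega

end hitTime

namespace IsDirPath

variable {p : ℕ → ℕ × ℕ}

theorem swap (hp : IsDirPath p) : IsDirPath (Prod.swap ∘ p) := by
  refine ⟨by simp [hp.1], fun t => ?_⟩
  rcases hp.2 t with h | h <;> simp [h]

theorem fst_add_snd (hp : IsDirPath p) (t : ℕ) : (p t).1 + (p t).2 = t := by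
  induction t with
  | zero => simp [hp.1]
  | succ t ih => rcases hp.2 t with h | h <;> rw [h] <;> omega

theorem fst_succ_le (hp : IsDirPath p) (t : ℕ) : (p (t + 1)).1 ≤ (p t).1 + 1 := by
  rcases hp.2 t with h | h <;> simp [h]

theorem snd_succ_le (hp : IsDirPath p) (t : ℕ) : (p (t + 1)).2 ≤ (p t).2 + 1 :=
  hp.swap.fst_succ_le t

theorem monotone_fst (hp : IsDirPath p) : Monotone fun t => (p t).1 :=
  monotone_nat_of_le_succ fun t => by rcases hp.2 t with h | h <;> simp [h]

theorem monotone_snd (hp : IsDirPath p) : Monotone fun t => (p t).2 :=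
  hp.swap.monotone_fst

theorem exists_snd_ge (hp : IsDirPath p) {a b : ℕ}
    (h : ∀ T, (p T).2 < b → (p T).1 < a) : ∃ T, b ≤ (p T).2 := by
  refine ⟨a + b, ?_⟩
  have := hp.fst_add_snd (a + b)
  have := h (a + b)
  omega

theorem exists_pred_hitTime (hp : IsDirPath p) {w c : ℕ}
    (hc : c < (p (hitTime (fun t => (p t).2) w)).1) :
    ∃ T, T + 1 = hitTime (fun t => (p t).2) w ∧ c ≤ (p T).1 ∧ (p T).2 < w := by
  set S := hitTime (fun t => (p t).2) w
  obtain ⟨T, hT⟩ : ∃ T, S = T + 1 := Nat.exists_eq_succ_of_ne_zero fun h => by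
    simp [h, hp.1] at hc
  have := hp.fst_succ_le T
  rw [← hT] at this
  exact ⟨T, hT.symm, by omega, apply_lt_of_lt_hitTime (f := fun t => (p t).2) (by omega)⟩

end IsDirPath

section Colourings

variable {m : ℕ}

def IsOccurrence (U : ℕ → Fin m) (s : ℕ) : Prop := ∀ a < m, (U (s + a) : ℕ) = a

def HasDropAt (V : ℕ → Fin m) (j : ℕ) : Prop := (V j : ℕ) + 2 ≤ V (j - 1)

def HasRiseAt (X : ℕ → Fin m) (c : ℕ) : Prop := (X (c - 1) : ℕ) + 2 ≤ X c

theorem hasDropAt_rev_comp {X : ℕ → Fin m} {c : ℕ} :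
    HasDropAt (Fin.rev ∘ X) c ↔ HasRiseAt X c := by
  simp only [HasDropAt, HasRiseAt, Function.comp_apply, Fin.val_rev]
  have := (X c).isLt
  have := (X (c - 1)).isLt
  omega

theorem IsOccurrence.add_le_of_lt {U : ℕ → Fin m} {s s' : ℕ} (hs : IsOccurrence U s)
    (hs' : IsOccurrence U s') (h : s < s') : s + m ≤ s' := by
  by_contra! h'
  have h₁ := hs (s' - s) (by omega)
  have h₀ : (U s' : ℕ) = 0 := by simpa using hs' 0 (by omega)
  rw [Nat.add_sub_cancel' h.le] at h₁
  omega

theorem IsOccurrence.not_hasRiseAt {X : ℕ → Fin m} {s c : ℕ} (hs : IsOccurrence X s)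
    (h₁ : s < c) (h₂ : c ≤ s + m) : ¬HasRiseAt X c := by
  obtain ⟨a, rfl⟩ : ∃ a, c = s + a + 1 := ⟨c - s - 1, by omega⟩
  have hXa := hs a (by omega)
  unfold HasRiseAt
  rw [Nat.add_sub_cancel]
  rcases Nat.lt_or_ge (a + 1) m with ha | ha
  · have := hs (a + 1) ha
    rw [← add_assoc] at this
    omega
  · have := (X (s + a + 1)).isLt
    omega

theorem isOccurrence_rev_comp_of_blocks {Y : ℕ → Fin m} {r k : ℕ}
    (hY : ∀ i < k, ∀ j < m, (Y (r + i * m + j) : ℕ) = m - 1 - j) {q : ℕ} (hq : q < k) :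
    IsOccurrence (Fin.rev ∘ Y) (r + q * m) := fun a ha => by
  simp only [Function.comp_apply, Fin.val_rev, hY q hq a ha]
  omega

theorem not_hasDropAt_of_blocks {Y : ℕ → Fin m} {r k : ℕ}
    (hY : ∀ i < k, ∀ j < m, (Y (r + i * m + j) : ℕ) = m - 1 - j) {j : ℕ}
    (h₁ : r < j) (h₂ : j < r + k * m) : ¬HasDropAt Y j := by
  have hm : 0 < m := Nat.pos_of_ne_zero fun h => by simp [h] at h₂; omega
  obtain ⟨q, b, hq, hb, hjb⟩ : ∃ q b, q < k ∧ b < m ∧ j - 1 = r + q * m + b := by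
    refine ⟨(j - 1 - r) / m, (j - 1 - r) % m, (Nat.div_lt_iff_lt_mul hm).2 (by omega),
      Nat.mod_lt _ hm, ?_⟩
    have := Nat.div_add_mod' (j - 1 - r) m
    omega
  unfold HasDropAt
  rw [hjb, hY q hq b hb]
  rcases Nat.lt_or_ge (b + 1) m with hb' | hb'
  · rw [show j = r + q * m + (b + 1) by omega, hY q hq (b + 1) hb']
    omega
  · omega

end Colourings

section Crossing

variable {m : ℕ} {U V : ℕ → Fin m} {p : ℕ → ℕ × ℕ}

theorem drop_or_lt_of_crossing (hp : IsDirPath p) (havoid : ∀ t, U (p t).1 ≠ V (p t).2)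
    {s T₀ : ℕ} (hs : IsOccurrence U s) (h₀ : (p T₀).1 = s) (d : ℕ) :
    (∃ j, (p T₀).2 < j ∧ j ≤ (p (T₀ + d)).2 ∧ HasDropAt V j) ∨
      (p (T₀ + d)).1 < s + V (p (T₀ + d)).2 := by
  have hne : ∀ t, (U (p t).1 : ℕ) ≠ V (p t).2 := fun t => Fin.val_ne_of_ne (havoid t)
  induction d with
  | zero =>
    have hU : (U s : ℕ) = 0 := by simpa using hs 0 (U 0).pos
    have := hne T₀
    rw [Nat.add_zero]
    rw [h₀] at this ⊢
    omega
  | succ d ih =>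
    rw [← Nat.add_assoc]
    set t := T₀ + d
    have hst : s ≤ (p t).1 := h₀ ▸ hp.monotone_fst (Nat.le_add_right T₀ d)
    have hyt : (p T₀).2 ≤ (p t).2 := hp.monotone_snd (Nat.le_add_right T₀ d)
    rcases ih with ⟨j, hj₀, hj₁, hj⟩ | ih
    · exact .inl ⟨j, hj₀, hj₁.trans (hp.monotone_snd (Nat.le_succ t)), hj⟩
    have hVt := (V (p t).2).isLt
    have hnext := hne (t + 1)
    rcases hp.2 t with h | h <;> rw [h] at hnext ⊢ <;> dsimp only at hnext ⊢
    · right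
      by_contra!
      have := hs ((p t).1 + 1 - s) (by omega)
      rw [Nat.add_sub_cancel' (by omega)] at this
      omega
    · by_cases hdrop : HasDropAt V ((p t).2 + 1)
      · exact .inl ⟨(p t).2 + 1, by omega, le_rfl, hdrop⟩
      right
      unfold HasDropAt at hdrop
      rw [Nat.add_sub_cancel] at hdrop
      have := hs ((p t).1 - s) (by omega)
      rw [Nat.add_sub_cancel' hst] at this
      omega

theorem exists_drop_of_crossing (hp : IsDirPath p) (havoid : ∀ t, U (p t).1 ≠ V (p t).2)
    {s T₀ T₁ : ℕ} (hs : IsOccurrence U s) (hT : T₀ ≤ T₁) (h₀ : (p T₀).1 ≤ s)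
    (h₁ : s + m ≤ (p T₁).1) : ∃ j, (p T₀).2 < j ∧ j ≤ (p T₁).2 ∧ HasDropAt V j := by
  obtain ⟨T, hT₀, hT₁, hx⟩ :=
    intermediate_value_of_succ_le_add_one (f := fun t => (p t).1) hp.fst_succ_le hT h₀ (by omega)
  rcases drop_or_lt_of_crossing hp havoid hs hx (T₁ - T) with ⟨j, hj₀, hj₁, hj⟩ | h <;>
    rw [Nat.add_sub_cancel' hT₁] at *
  · exact ⟨j, (hp.monotone_snd hT₀).trans_lt hj₀, hj₁, hj⟩
  · have := (V (p T₁).2).isLt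
    omega

theorem exists_drop_of_crossing_bands (hp : IsDirPath p)
    (havoid : ∀ t, U (p t).1 ≠ V (p t).2) {τ : ℕ → ℕ} {N : ℕ}
    (hocc : ∀ ℓ, 1 ≤ ℓ → ℓ ≤ N → IsOccurrence U (τ ℓ))
    (hsep : ∀ ℓ, 1 ≤ ℓ → ℓ < N → τ ℓ + m ≤ τ (ℓ + 1)) {ℓ : ℕ} (hℓ : 1 ≤ ℓ) (hℓN : ℓ ≤ N)
    {T : ℕ} (hT : τ ℓ + m ≤ (p T).1) : ∃ j, ℓ ≤ j ∧ j ≤ (p T).2 ∧ HasDropAt V j := by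
  induction ℓ, hℓ using Nat.le_induction generalizing T with
  | base =>
    obtain ⟨j, hj₀, hj⟩ := exists_drop_of_crossing hp havoid (hocc 1 le_rfl hℓN)
      (Nat.zero_le T) (by simp [hp.1]) hT
    exact ⟨j, by omega, hj⟩
  | succ ℓ hℓ ih =>
    obtain ⟨T₀, -, hT₀, hx⟩ := intermediate_value_of_succ_le_add_one (f := fun t => (p t).1)
      hp.fst_succ_le (Nat.zero_le T) (by simp [hp.1]) (show τ (ℓ + 1) ≤ (p T).1 by omega)
    obtain ⟨j₀, hj₀, hj₀T₀, -⟩ := ih (by omega) (hx ▸ hsep ℓ hℓ (by omega))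
    obtain ⟨j, hj, hjT, hdrop⟩ :=
      exists_drop_of_crossing hp havoid (hocc (ℓ + 1) (by omega) hℓN) hT₀ hx.le hT
    exact ⟨j, by omega, hjT, hdrop⟩

end Crossing

section Blocking

variable {m : ℕ} {X Y : ℕ → Fin m} {p : ℕ → ℕ × ℕ}

theorem fst_lt_of_snd_lt (hp : IsDirPath p) (havoid : ∀ t, X (p t).1 ≠ Y (p t).2)
    {τ : ℕ → ℕ} {N r k : ℕ} (hocc : ∀ ℓ, 1 ≤ ℓ → ℓ ≤ N → IsOccurrence X (τ ℓ))
    (hsep : ∀ ℓ, 1 ≤ ℓ → ℓ < N → τ ℓ + m ≤ τ (ℓ + 1))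
    (hY : ∀ i < k, ∀ j < m, (Y (r + i * m + j) : ℕ) = m - 1 - j) (hrN : r < N) {T : ℕ}
    (hT : (p T).2 < r + k * m) : (p T).1 < τ N + m := by
  by_contra! h
  obtain ⟨j, hNj, hjT, hj⟩ :=
    exists_drop_of_crossing_bands hp havoid hocc hsep (by omega) le_rfl h
  exact not_hasDropAt_of_blocks hY (by omega) (by omega) hj

theorem fst_hitTime_le_of_no_drop (hp : IsDirPath p) (havoid : ∀ t, X (p t).1 ≠ Y (p t).2)
    {s v w : ℕ} (hs : IsOccurrence X s) (hfree : ∀ j, v < j → j < w → ¬HasDropAt Y j)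
    (hvw : v ≤ w) (hw : ∃ T, w ≤ (p T).2) (h₀ : (p (hitTime (fun t => (p t).2) v)).1 ≤ s) :
    (p (hitTime (fun t => (p t).2) w)).1 ≤ s + m := by
  by_contra! h₁
  obtain ⟨T, hT, hsT, hTw⟩ := hp.exists_pred_hitTime h₁
  have hvT : hitTime (fun t => (p t).2) v ≤ T := by
    by_contra! hTv
    have := hp.monotone_fst
      (show hitTime (fun t => (p t).2) w ≤ hitTime (fun t => (p t).2) v by omega)
    dsimp only at this
    omega
  have hv : v ≤ (p (hitTime (fun t => (p t).2) v)).2 :=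
    le_apply_hitTime (hw.imp fun _ h => hvw.trans h)
  obtain ⟨j, hj₀, hjT, hj⟩ := exists_drop_of_crossing hp havoid hs hvT h₀ hsT
  exact hfree j (by omega) (by omega) hj

theorem exists_rises_of_crossing_blocks (hp : IsDirPath p)
    (havoid : ∀ t, X (p t).1 ≠ Y (p t).2) {r k : ℕ}
    (hY : ∀ i < k, ∀ j < m, (Y (r + i * m + j) : ℕ) = m - 1 - j) (hk : 1 ≤ k)
    (hreach : ∃ T, r + k * m ≤ (p T).2) :
    ∃ a b, (p (hitTime (fun t => (p t).2) r)).1 < a ∧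
      a ≤ (p (hitTime (fun t => (p t).2) (r + m))).1 ∧ HasRiseAt X a ∧
      b ≤ (p (hitTime (fun t => (p t).2) (r + k * m))).1 ∧ HasRiseAt X b ∧ a + (k - 1) ≤ b := by
  set S : ℕ → ℕ := fun q => hitTime (fun t => (p t).2) (r + q * m) with hS
  have havoid' : ∀ t, (Fin.rev ∘ Y) ((Prod.swap ∘ p) t).1 ≠ (Fin.rev ∘ X) ((Prod.swap ∘ p) t).2 :=
    fun t => by simpa [Fin.rev_inj] using (havoid t).symm
  have hcross : ∀ q < k, ∃ c, (p (S q)).1 < c ∧ c ≤ (p (S (q + 1))).1 ∧ HasRiseAt X c := by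
    intro q hq
    have hreach' : ∃ T, r + (q + 1) * m ≤ (p T).2 :=
      hreach.imp fun T h => le_trans (by nlinarith) h
    have h₀ : (p (S q)).2 ≤ r + q * m :=
      apply_hitTime_le (f := fun t => (p t).2) hp.snd_succ_le (by simp [hp.1])
    have h₁ : r + q * m + m ≤ (p (S (q + 1))).2 :=
      (by ring_nf : r + q * m + m = r + (q + 1) * m) ▸ le_apply_hitTime hreach'
    obtain ⟨c, hc₀, hc₁, hc⟩ := exists_drop_of_crossing hp.swap havoid'
      (isOccurrence_rev_comp_of_blocks hY hq) (T₀ := S q) (T₁ := S (q + 1))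
      (hitTime_mono (by nlinarith) hreach') (by simpa using h₀) (by simpa using h₁)
    exact ⟨c, by simpa using hc₀, by simpa using hc₁, hasDropAt_rev_comp.1 hc⟩
  choose! c hc using hcross
  have hspread : ∀ q < k, c 0 + q ≤ c q := by
    intro q hq
    induction q with
    | zero => rfl
    | succ q ih =>
      have := (hc q (by omega)).2.1.trans_lt (hc (q + 1) hq).1
      have := ih (by omega)
      omega
  refine ⟨c 0, c (k - 1), by simpa [hS] using (hc 0 (by omega)).1,
    by simpa [hS] using (hc 0 (by omega)).2.1, (hc 0 (by omega)).2.2, ?_,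
    (hc (k - 1) (by omega)).2.2, hspread (k - 1) (by omega)⟩
  simpa [hS, Nat.sub_add_cancel hk] using (hc (k - 1) (by omega)).2.1

end Blocking

theorem false_of_rises_between_bands {m n k a b : ℕ} {τ : ℕ → ℕ} (hτ1 : τ 1 ≤ k - 1)
    (hgap : ∀ i, 1 ≤ i → i ≤ n → τ (i + 1) ≤ τ i + m + (k - 1)) (ha : 1 ≤ a)
    (hab : a + (k - 1) ≤ b) (hlast : a ≤ τ (n + 1) + m)
    (haout : ∀ ℓ, 1 ≤ ℓ → ℓ ≤ n + 1 → a ≤ τ ℓ ∨ τ ℓ + m < a)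
    (hbout : ∀ ℓ, 1 ≤ ℓ → ℓ ≤ n + 1 → b ≤ τ ℓ ∨ τ ℓ + m < b)
    (hstraddle : ∀ ℓ, 1 ≤ ℓ → ℓ ≤ n + 1 → a ≤ τ ℓ → b ≤ τ ℓ + m) : False := by
  have hex : ∃ ℓ, 1 ≤ ℓ ∧ a ≤ τ ℓ + m := ⟨n + 1, by omega, hlast⟩
  obtain ⟨ℓ, ⟨hℓ, haℓ⟩, hmin⟩ : ∃ ℓ, (1 ≤ ℓ ∧ a ≤ τ ℓ + m) ∧ ∀ i < ℓ, ¬(1 ≤ i ∧ a ≤ τ i + m) :=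
    ⟨Nat.find hex, Nat.find_spec hex, fun _ => Nat.find_min hex⟩
  have hℓn : ℓ ≤ n + 1 := by
    by_contra! h
    exact hmin (n + 1) h ⟨by omega, hlast⟩
  have haℓ' := (haout ℓ hℓ hℓn).resolve_right (by omega)
  have hbℓ := (hbout ℓ hℓ hℓn).resolve_right (by have := hstraddle ℓ hℓ hℓn haℓ'; omega)
  obtain rfl | hℓ2 : ℓ = 1 ∨ 2 ≤ ℓ := by omega
  · omega
  · obtain ⟨i, rfl⟩ : ∃ i, ℓ = i + 1 := ⟨ℓ - 1, by omega⟩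
    have := hmin i (by omega)
    have := hgap i (by omega) (by omega)
    omega

theorem blocking_lemma_general (m n k : ℕ) (hk : 1 ≤ k)
    (X Y : ℕ → Fin m) (τ : ℕ → ℕ)
    (hocc : ∀ i, 1 ≤ i → i ≤ n + 1 → ∀ j < m, (X (τ i + j) : ℕ) = j)
    (hmono : ∀ i, 1 ≤ i → i ≤ n → τ i < τ (i + 1))
    (hτ1 : τ 1 ≤ k - 1)
    (hgap : ∀ i, 1 ≤ i → i ≤ n → τ (i + 1) ≤ τ i + m + (k - 1))
    (hY : ∀ i < k, ∀ j < m, (Y (n - 1 + i * m + j) : ℕ) = m - 1 - j) :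
    ¬ ∃ p : ℕ → ℕ × ℕ, IsDirPath p ∧ ∀ t, X (p t).1 ≠ Y (p t).2 := by
  rintro ⟨p, hp, havoid⟩
  have hocc' : ∀ ℓ, 1 ≤ ℓ → ℓ ≤ n + 1 → IsOccurrence X (τ ℓ) := hocc
  have hsep : ∀ ℓ, 1 ≤ ℓ → ℓ < n + 1 → τ ℓ + m ≤ τ (ℓ + 1) := fun ℓ h₁ h₂ =>
    (hocc' ℓ h₁ h₂.le).add_le_of_lt (hocc' (ℓ + 1) (by omega) (by omega)) (hmono ℓ h₁ (by omega))
  have hbelow : ∀ T, (p T).2 < n - 1 + k * m → (p T).1 < τ (n + 1) + m := fun T =>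
    fst_lt_of_snd_lt hp havoid hocc' hsep hY (by omega)
  have hreach := hp.exists_snd_ge hbelow
  obtain ⟨a, b, ha₀, ha₁, ha, hb₁, hb, hab⟩ :=
    exists_rises_of_crossing_blocks hp havoid hY hk hreach
  have hout : ∀ c, HasRiseAt X c → ∀ ℓ, 1 ≤ ℓ → ℓ ≤ n + 1 → c ≤ τ ℓ ∨ τ ℓ + m < c :=
    fun c hc ℓ h₁ h₂ => by
      by_contra! h
      exact (hocc' ℓ h₁ h₂).not_hasRiseAt h.1 h.2 hc
  refine false_of_rises_between_bands hτ1 hgap (by omega) hab ?_ (hout a ha) (hout b hb) ?_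
  · by_contra! h
    obtain ⟨T, -, hT, hTy⟩ := hp.exists_pred_hitTime (h.trans_le ha₁)
    exact (hbelow T (by nlinarith)).not_ge hT
  · intro ℓ h₁ h₂ haℓ
    exact hb₁.trans (fst_hitTime_le_of_no_drop hp havoid (hocc' ℓ h₁ h₂)
      (fun j => not_hasDropAt_of_blocks hY) (Nat.le_add_right _ _) hreach (by omega))

/-- Blocking lemma: if `X` contains `n` consecutive occurrences of the basic colour
sequence `b_m = (0,…,m-1)`, the `i`-th starting at `τ i`, with `τ 1 ≤ k-1` and
`τ (i+1) - m - τ i ≤ k-1` for `1 ≤ i ≤ n`, and `Y` has `k` consecutive repetitions of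
the reversed sequence `b'_m` starting at index `n-1`, then there is no infinite
directed path from the origin avoiding all blocked points `(i,j)` (where `(i,j)` is
blocked iff `X i = Y j`). -/
theorem blocking_lemma (m n k : ℕ) (hm : 2 ≤ m) (hn : 1 ≤ n) (hk : 1 ≤ k)
    (X Y : ℕ → Fin m) (τ : ℕ → ℕ)
    (hocc : ∀ i, 1 ≤ i → i ≤ n + 1 → ∀ j < m, (X (τ i + j) : ℕ) = j)
    (hmono : ∀ i, 1 ≤ i → i ≤ n → τ i < τ (i + 1))
    (hτ1 : τ 1 ≤ k - 1)
    (hgap : ∀ i, 1 ≤ i → i ≤ n → τ (i + 1) ≤ τ i + m + (k - 1))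
    (hY : ∀ i < k, ∀ j < m, (Y (n - 1 + i * m + j) : ℕ) = m - 1 - j) :
    ¬ ∃ p : ℕ → ℕ × ℕ, IsDirPath p ∧ ∀ t, X (p t).1 ≠ Y (p t).2 :=
  blocking_lemma_general m n k hk X Y τ hocc hmono hτ1 hgap hY
end

section
/- With X i.i.d. uniform on Fin m, τ_i the index of the i-th occurrence of b_m in X, and ℱ_{n,k} the event that τ_1 ≤ k−1 and τ_{i+1} − m − τ_i ≤ k−1 for all i ∈ [1,n], we have P(ℱ_{n,k}) > 1 − (n+1)·e^{−p₁ k/m} where p₁ = m^{−m}. In particular, for k = ⌈(s+1)(m log n)/p₁⌉ with s > 0 and n large, P(ℱ_{n,k}) > 1 − n^{−s}. -/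
set_option linter.unusedSectionVars false
set_option linter.unusedVariables false
set_option linter.deprecated false
set_option maxHeartbeats 1000000


open MeasureTheory ProbabilityTheory
open scoped ENNReal
open scoped Classical

variable {Ω : Type*}

/-- The set of indices where an occurrence of `b_m = (0,…,m-1)` starts in `X · ω`. -/
def occSet {m : ℕ} (X : ℕ → Ω → Fin m) (ω : Ω) : Set ℕ :=
  {t | ∀ j < m, (X (t + j) ω : ℕ) = j}

/-- `tauOcc X i ω` is the `i`-th index of occurrence of `b_m` in `X · ω` (for `i ≥ 1`). -/
noncomputable def tauOcc {m : ℕ} (X : ℕ → Ω → Fin m) (i : ℕ) (ω : Ω) : ℕ :=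
  Nat.nth (· ∈ occSet X ω) (i - 1)

/-- The event `ℱ_{n,k}`: all occurrence indices are finite, `τ₁ ≤ k-1`, and
`τ_{i+1} - m - τ_i ≤ k-1` for all `i ∈ [1,n]`. -/
def FEvent {m : ℕ} (X : ℕ → Ω → Fin m) (n k : ℕ) : Set Ω :=
  {ω | (occSet X ω).Infinite ∧ tauOcc X 1 ω ≤ k - 1 ∧
    ∀ i, 1 ≤ i → i ≤ n → tauOcc X (i + 1) ω ≤ tauOcc X i ω + m + (k - 1)}


section OccAuxSec

namespace OccAux

variable {m : ℕ} (X : ℕ → Ω → Fin m)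

/-- the window map reading coordinates `a, …, a+N-1`. -/
def vecMap (a N : ℕ) : Ω → (Fin N → Fin m) := fun ω j => X (a + (j : ℕ)) ω

/-- occurrence of the pattern at relative position `s` in a window vector. -/
def occV {m N : ℕ} (v : Fin N → Fin m) (s : ℕ) : Prop :=
  ∀ j < m, ∀ h : s + j < N, (v ⟨s + j, h⟩ : ℕ) = j

lemma occV_iff {a N s : ℕ} (hs : s + m ≤ N) (ω : Ω) :
    occV (vecMap X a N ω) s ↔ (a + s) ∈ occSet X ω := by
  constructor
  · intro h j hj
    have hlt : s + j < N := by omega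
    have := h j hj hlt
    simpa [vecMap, Nat.add_assoc] using this
  · intro h j hj hlt
    have := h j hj
    simpa [vecMap, Nat.add_assoc] using this

lemma measurable_vecMap [MeasurableSpace Ω] (hXm : ∀ i, Measurable (X i)) (a N : ℕ) :
    Measurable (vecMap X a N) :=
  measurable_pi_lambda _ fun _ => hXm _

lemma measurableSet_vec {N : ℕ} (B : Set (Fin N → Fin m)) : MeasurableSet B :=
  (Set.toFinite B).measurableSet


/-- event: occurrence at `t`. -/
def OccE (t : ℕ) : Set Ω := {ω | t ∈ occSet X ω}

/-- event: no occurrence at any of the block starts `a, a+m, …, a+(q-1)m`. -/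
def Hset (a q : ℕ) : Set Ω := {ω | ∀ r < q, (a + r * m) ∉ occSet X ω}

/-- event: occurrence at `t` which is the `(i-1)`-th (0-indexed) occurrence. -/
def Dset (i t : ℕ) : Set Ω :=
  {ω | t ∈ occSet X ω ∧ Nat.count (· ∈ occSet X ω) t = i - 1}

lemma OccE_eq (t : ℕ) :
    OccE X t = vecMap X t m ⁻¹' {v | occV v 0} := by
  ext ω
  have := occV_iff X (a := t) (N := m) (s := 0) (by omega) ω
  simp only [Nat.add_zero] at this
  simpa [OccE, Set.mem_preimage] using this.symm

lemma Hset_eq (a q : ℕ) :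
    Hset X a q = vecMap X a (q * m) ⁻¹' {v | ∀ r < q, ¬ occV v (r * m)} := by
  ext ω
  simp only [Hset, Set.mem_preimage, Set.mem_setOf_eq]
  refine forall_congr' fun r => forall_congr' fun hr => not_congr ?_
  have hs : r * m + m ≤ q * m := by
    have h1 : (r + 1) * m ≤ q * m := Nat.mul_le_mul_right m hr
    simpa [add_mul] using h1
  exact (occV_iff X hs ω).symm

lemma Dset_eq (i t : ℕ) :
    Dset X i t = vecMap X 0 (t + m) ⁻¹'
      {v | occV v t ∧ (Finset.filter (fun s => occV v s) (Finset.range t)).card = i - 1} := by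
  ext ω
  simp only [Dset, Set.mem_preimage, Set.mem_setOf_eq]
  have h1 : occV (vecMap X 0 (t + m) ω) t ↔ t ∈ occSet X ω := by
    simpa using occV_iff X (a := 0) (s := t) le_rfl ω
  have h2 : (Finset.filter (fun s => occV (vecMap X 0 (t + m) ω) s) (Finset.range t)).card
      = Nat.count (· ∈ occSet X ω) t := by
    rw [Nat.count_eq_card_filter_range]
    congr 1
    apply Finset.filter_congr
    intro s hs
    simp only [Finset.mem_range] at hs
    simpa using occV_iff X (a := 0) (s := s) (by omega) ω
  rw [h1, h2]


section Meas
variable [MeasurableSpace Ω] (μ : Measure Ω)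

lemma indep2 (hXm : ∀ i, Measurable (X i))
    (hindep : iIndepFun X μ)
    {a N b N' : ℕ} (hab : a + N ≤ b)
    (A : Set (Fin N → Fin m)) (B : Set (Fin N' → Fin m)) :
    μ (vecMap X a N ⁻¹' A ∩ vecMap X b N' ⁻¹' B)
      = μ (vecMap X a N ⁻¹' A) * μ (vecMap X b N' ⁻¹' B) := by
  set S : Finset ℕ := Finset.Ico a (a + N)
  set T : Finset ℕ := Finset.Ico b (b + N')
  have hST : Disjoint S T := by
    rw [Finset.disjoint_left]
    intro x hx hx'
    simp only [S, T, Finset.mem_Ico] at hx hx'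
    omega
  have h := hindep.indepFun_finset S T hST hXm
  set φ : ((i : S) → Fin m) → (Fin N → Fin m) :=
    fun g j => g ⟨a + (j : ℕ), by simp only [S, Finset.mem_Ico]; omega⟩
  set ψ : ((i : T) → Fin m) → (Fin N' → Fin m) :=
    fun g j => g ⟨b + (j : ℕ), by simp only [T, Finset.mem_Ico]; omega⟩
  have hφ : Measurable φ := measurable_pi_lambda _ fun _ => measurable_pi_apply _
  have hψ : Measurable ψ := measurable_pi_lambda _ fun _ => measurable_pi_apply _
  have h2 := h.comp hφ hψ
  have e1 : φ ∘ (fun ω (i : S) => X i ω) = vecMap X a N := rfl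
  have e2 : ψ ∘ (fun ω (i : T) => X i ω) = vecMap X b N' := rfl
  rw [e1, e2] at h2
  exact h2.measure_inter_preimage_eq_mul A B (measurableSet_vec A) (measurableSet_vec B)


variable [IsProbabilityMeasure μ]

/-- probability of a single occurrence event. -/
lemma meas_OccE (hindep : iIndepFun X μ)
    (hunif : ∀ i (a : Fin m), μ {ω | X i ω = a} = (m : ℝ≥0∞)⁻¹) (t : ℕ) : μ (OccE X t) = ((m : ℝ≥0∞)⁻¹) ^ m := by
  classical
  set sets : ℕ → Set (Fin m) := fun i => {x : Fin m | (x : ℕ) = i - t}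
  have hset : OccE X t = ⋂ i ∈ Finset.Ico t (t + m), X i ⁻¹' sets i := by
    ext ω
    simp only [OccE, occSet, Set.mem_setOf_eq, Set.mem_iInter, Set.mem_preimage,
      Finset.mem_Ico, sets]
    constructor
    · intro h i hi
      have := h (i - t) (by omega)
      have hit : t + (i - t) = i := by omega
      rw [hit] at this
      exact this
    · intro h j hj
      have := h (t + j) ⟨by omega, by omega⟩
      simpa using this
  rw [hset, hindep.measure_inter_preimage_eq_mul (Finset.Ico t (t + m)) (sets := sets)
    (fun i _ => MeasurableSet.of_discrete)]
  have hfac : ∀ i ∈ Finset.Ico t (t + m), μ (X i ⁻¹' sets i) = (m : ℝ≥0∞)⁻¹ := by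
    intro i hi
    simp only [Finset.mem_Ico] at hi
    have hlt : i - t < m := by omega
    have : sets i = {(⟨i - t, hlt⟩ : Fin m)} := by
      ext x; simp [sets, Fin.ext_iff]
    rw [this]
    have : X i ⁻¹' {(⟨i - t, hlt⟩ : Fin m)} = {ω | X i ω = ⟨i - t, hlt⟩} := rfl
    rw [this, hunif]
  rw [Finset.prod_congr rfl hfac, Finset.prod_const, Nat.card_Ico]
  congr 1
  omega

lemma measurableSet_OccE (hXm : ∀ i, Measurable (X i)) (t : ℕ) : MeasurableSet (OccE X t) := by
  rw [OccE_eq]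
  exact (measurable_vecMap X hXm t m) (measurableSet_vec _)

lemma meas_Hset (hXm : ∀ i, Measurable (X i))
    (hindep : iIndepFun X μ)
    (hunif : ∀ i (a : Fin m), μ {ω | X i ω = a} = (m : ℝ≥0∞)⁻¹) (a q : ℕ) :
    μ (Hset X a q) = (1 - ((m : ℝ≥0∞)⁻¹) ^ m) ^ q := by
  induction q generalizing a with
  | zero =>
    have : Hset X a 0 = Set.univ := by ext ω; simp [Hset]
    simp [this]
  | succ q ih =>
    have hsplit : Hset X a (q + 1)
        = vecMap X a (q * m) ⁻¹' {v | ∀ r < q, ¬ occV v (r * m)}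
          ∩ vecMap X (a + q * m) m ⁻¹' {v | ¬ occV v 0} := by
      rw [← Hset_eq]
      have hC : vecMap X (a + q * m) m ⁻¹' {v | ¬ occV v 0} = (OccE X (a + q * m))ᶜ := by
        rw [OccE_eq]
        ext ω; simp
      rw [hC]
      ext ω
      simp only [Hset, Set.mem_setOf_eq, Set.mem_inter_iff, Set.mem_compl_iff, OccE]
      constructor
      · intro h
        exact ⟨fun r hr => h r (by omega), h q (by omega)⟩
      · rintro ⟨h1, h2⟩ r hr
        rcases Nat.lt_succ_iff_lt_or_eq.mp hr with h | h
        · exact h1 r h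
        · subst h; exact h2
    rw [hsplit, indep2 X μ hXm hindep le_rfl, ← Hset_eq, ih]
    have hC : vecMap X (a + q * m) m ⁻¹' {v | ¬ occV v 0} = (OccE X (a + q * m))ᶜ := by
      rw [OccE_eq]; ext ω; simp
    rw [hC, prob_compl_eq_one_sub (measurableSet_OccE X hXm _), meas_OccE X μ hindep hunif]
    ring


lemma measurableSet_Hset (hXm : ∀ i, Measurable (X i)) (a q : ℕ) :
    MeasurableSet (Hset X a q) := by
  rw [Hset_eq]
  exact (measurable_vecMap X hXm a (q * m)) (measurableSet_vec _)

lemma measurableSet_Dset (hXm : ∀ i, Measurable (X i)) (i t : ℕ) :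
    MeasurableSet (Dset X i t) := by
  rw [Dset_eq]
  exact (measurable_vecMap X hXm 0 (t + m)) (measurableSet_vec _)

lemma meas_Dset_inter (hXm : ∀ i, Measurable (X i))
    (hindep : iIndepFun X μ)
    (hunif : ∀ i (a : Fin m), μ {ω | X i ω = a} = (m : ℝ≥0∞)⁻¹) (i t q : ℕ) :
    μ (Dset X i t ∩ Hset X (t + m) q)
      = μ (Dset X i t) * (1 - ((m : ℝ≥0∞)⁻¹) ^ m) ^ q := by
  rw [Dset_eq, Hset_eq, indep2 X μ hXm hindep (by omega), ← Dset_eq, ← Hset_eq,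
    meas_Hset X μ hXm hindep hunif]

lemma p1_pos : (0 : ℝ≥0∞) < ((m : ℝ≥0∞)⁻¹) ^ m := by
  apply ENNReal.pow_pos
  simp only [ENNReal.inv_pos]
  exact ENNReal.natCast_ne_top m

lemma meas_not_infinite (hXm : ∀ i, Measurable (X i))
    (hindep : iIndepFun X μ)
    (hunif : ∀ i (a : Fin m), μ {ω | X i ω = a} = (m : ℝ≥0∞)⁻¹) :
    μ {ω | ¬ (occSet X ω).Infinite} = 0 := by
  have hsub : {ω | ¬ (occSet X ω).Infinite} ⊆ ⋃ N : ℕ, ⋂ q : ℕ, Hset X N q := by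
    intro ω hω
    simp only [Set.mem_setOf_eq, Set.not_infinite] at hω
    obtain ⟨N, hN⟩ : ∃ N, ∀ s ∈ occSet X ω, s < N := by
      rcases hω.bddAbove with ⟨N, hN⟩
      exact ⟨N + 1, fun s hs => Nat.lt_succ_of_le (hN hs)⟩
    refine Set.mem_iUnion.mpr ⟨N, Set.mem_iInter.mpr fun q r hr hmem => ?_⟩
    exact absurd (hN _ hmem) (by omega)
  refine measure_mono_null hsub (measure_iUnion_null fun N => ?_)
  have hle : ∀ q : ℕ, μ (⋂ q' : ℕ, Hset X N q') ≤ (1 - ((m : ℝ≥0∞)⁻¹) ^ m) ^ q :=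
    fun q => (measure_mono (Set.iInter_subset _ q)).trans_eq
      (meas_Hset X μ hXm hindep hunif N q)
  have hlt1 : (1 : ℝ≥0∞) - ((m : ℝ≥0∞)⁻¹) ^ m < 1 :=
    ENNReal.sub_lt_self ENNReal.one_ne_top one_ne_zero (p1_pos (m := m)).ne'
  have htend := ENNReal.tendsto_pow_atTop_nhds_zero_of_lt_one hlt1
  have := ge_of_tendsto' htend hle
  simpa using this

lemma Dset_disjoint (i : ℕ) : Pairwise (Function.onFun Disjoint fun t => Dset X i t) := by
  have key : ∀ t t' : ℕ, t < t' → ∀ ω, ω ∈ Dset X i t → ω ∉ Dset X i t' := by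
    intro t t' hlt ω ⟨hmem, hcnt⟩ ⟨hmem', hcnt'⟩
    have h1 : Nat.count (· ∈ occSet X ω) (t + 1)
        = Nat.count (· ∈ occSet X ω) t + 1 := by
      rw [Nat.count_succ, if_pos hmem]
    have h2 := Nat.count_monotone (· ∈ occSet X ω) (show t + 1 ≤ t' by omega)
    omega
  intro t t' hne
  rcases Nat.lt_or_ge t t' with h | h
  · exact Set.disjoint_left.mpr fun ω hω hω' => key t t' h ω hω hω'
  · exact Set.disjoint_right.mpr fun ω hω hω' => key t' t (by omega) ω hω hω'

lemma tsum_Dset_le (hXm : ∀ i, Measurable (X i)) (i : ℕ) :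
    ∑' t : ℕ, μ (Dset X i t) ≤ 1 := by
  rw [← measure_iUnion (Dset_disjoint X i) (measurableSet_Dset X hXm i)]
  exact prob_le_one


lemma compl_subset (hm : 1 ≤ m) (n k : ℕ) (hk : 1 ≤ k) :
    (FEvent X n k)ᶜ ⊆
      {ω | ¬ (occSet X ω).Infinite} ∪ Hset X 0 ((k - 1) / m + 1) ∪
        ⋃ i ∈ Finset.Icc 1 n, ⋃ t : ℕ,
          (Dset X i t ∩ Hset X (t + m) ((k - 1) / m + 1)) := by
  intro ω hω
  by_cases hI : (occSet X ω).Infinite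
  swap
  · exact Or.inl (Or.inl hI)
  set q : ℕ := (k - 1) / m + 1 with hq
  set p : ℕ → Prop := (· ∈ occSet X ω) with hp
  have hpI : (setOf p).Infinite := hI
  have hω' : ¬(tauOcc X 1 ω ≤ k - 1 ∧ ∀ i, 1 ≤ i → i ≤ n →
      tauOcc X (i + 1) ω ≤ tauOcc X i ω + m + (k - 1)) := fun h => hω ⟨hI, h⟩
  have hrm_le : ∀ r < q, r * m ≤ k - 1 := by
    intro r hr
    have : r ≤ (k - 1) / m := by omega
    calc r * m ≤ ((k - 1) / m) * m := Nat.mul_le_mul_right m this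
    _ ≤ k - 1 := Nat.div_mul_le_self _ _
  rcases Classical.em (tauOcc X 1 ω ≤ k - 1) with h1 | h1
  · -- gap case
    rcases Classical.em (∀ i, 1 ≤ i → i ≤ n →
        tauOcc X (i + 1) ω ≤ tauOcc X i ω + m + (k - 1)) with h2 | h2
    · exact absurd ⟨h1, h2⟩ hω'
    · push_neg at h2
      obtain ⟨i, hi1, hin, hbad⟩ := h2
      set t : ℕ := Nat.nth p (i - 1) with ht
      have htau_i : tauOcc X i ω = t := rfl
      have htau_succ : tauOcc X (i + 1) ω = Nat.nth p i := by
        simp [tauOcc, hp]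
      rw [htau_succ, htau_i] at hbad
      have : ω ∈ ⋃ i ∈ Finset.Icc 1 n, ⋃ t : ℕ,
          (Dset X i t ∩ Hset X (t + m) ((k - 1) / m + 1)) := by
        refine Set.mem_biUnion (Finset.mem_Icc.mpr ⟨hi1, hin⟩) ?_
        refine Set.mem_iUnion.mpr ⟨t, Set.mem_inter ?_ ?_⟩
        · exact ⟨Nat.nth_mem_of_infinite hpI _, Nat.count_nth_of_infinite hpI _⟩
        · intro r hr hmem
          set s : ℕ := t + m + r * m with hs
          have hps : p s := hmem
          have hcnt : i ≤ Nat.count p s := by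
            have h3 : Nat.count p (t + 1) = Nat.count p t + 1 := by
              rw [Nat.count_succ, if_pos (Nat.nth_mem_of_infinite hpI _)]
            have h4 : Nat.count p t = i - 1 := Nat.count_nth_of_infinite hpI _
            have h5 := Nat.count_monotone p (show t + 1 ≤ s by omega)
            omega
          have h6 : Nat.nth p i ≤ s := by
            calc Nat.nth p i ≤ Nat.nth p (Nat.count p s) := (Nat.nth_le_nth hpI).mpr hcnt
            _ = s := Nat.nth_count hps
          have h7 : s ≤ t + m + (k - 1) := by
            have := hrm_le r hr
            omega
          omega
      exact Or.inr this
  · -- first occurrence case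
    refine Or.inl (Or.inr ?_)
    intro r hr hmem
    have hnth0 : Nat.nth p 0 ≤ 0 + r * m := by
      calc Nat.nth p 0 ≤ Nat.nth p (Nat.count p (0 + r * m)) :=
        (Nat.nth_le_nth hpI).mpr (Nat.zero_le _)
      _ = 0 + r * m := Nat.nth_count hmem
    have h8 : tauOcc X 1 ω = Nat.nth p 0 := rfl
    have := hrm_le r hr
    omega


lemma compl_bound (hm : 1 ≤ m) (hXm : ∀ i, Measurable (X i))
    (hindep : iIndepFun X μ)
    (hunif : ∀ i (a : Fin m), μ {ω | X i ω = a} = (m : ℝ≥0∞)⁻¹)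
    (n k : ℕ) (hk : 1 ≤ k) :
    μ ((FEvent X n k)ᶜ)
      ≤ (n + 1 : ℝ≥0∞) * (1 - ((m : ℝ≥0∞)⁻¹) ^ m) ^ ((k - 1) / m + 1) := by
  set q : ℕ := (k - 1) / m + 1 with hq
  set β : ℝ≥0∞ := (1 - ((m : ℝ≥0∞)⁻¹) ^ m) ^ q with hβ
  calc μ ((FEvent X n k)ᶜ)
      ≤ μ ({ω | ¬ (occSet X ω).Infinite} ∪ Hset X 0 q ∪
          ⋃ i ∈ Finset.Icc 1 n, ⋃ t : ℕ, (Dset X i t ∩ Hset X (t + m) q)) :=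
        measure_mono (compl_subset X hm n k hk)
    _ ≤ μ ({ω | ¬ (occSet X ω).Infinite} ∪ Hset X 0 q) +
          μ (⋃ i ∈ Finset.Icc 1 n, ⋃ t : ℕ, (Dset X i t ∩ Hset X (t + m) q)) :=
        measure_union_le _ _
    _ ≤ (μ {ω | ¬ (occSet X ω).Infinite} + μ (Hset X 0 q)) +
          μ (⋃ i ∈ Finset.Icc 1 n, ⋃ t : ℕ, (Dset X i t ∩ Hset X (t + m) q)) :=
        add_le_add_left (measure_union_le _ _) _
    _ ≤ (0 + β) + (n : ℝ≥0∞) * β := by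
        refine add_le_add (add_le_add ?_ ?_) ?_
        · exact le_of_eq (meas_not_infinite X μ hXm hindep hunif)
        · exact le_of_eq (meas_Hset X μ hXm hindep hunif 0 q)
        · calc μ (⋃ i ∈ Finset.Icc 1 n, ⋃ t : ℕ, (Dset X i t ∩ Hset X (t + m) q))
              ≤ ∑ i ∈ Finset.Icc 1 n,
                  μ (⋃ t : ℕ, (Dset X i t ∩ Hset X (t + m) q)) :=
                measure_biUnion_finset_le _ _
            _ ≤ ∑ i ∈ Finset.Icc 1 n, β := by
                refine Finset.sum_le_sum fun i _ => ?_
                calc μ (⋃ t : ℕ, (Dset X i t ∩ Hset X (t + m) q))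
                    ≤ ∑' t : ℕ, μ (Dset X i t ∩ Hset X (t + m) q) :=
                      measure_iUnion_le _
                  _ = ∑' t : ℕ, μ (Dset X i t) * β := by
                      refine tsum_congr fun t => ?_
                      exact meas_Dset_inter X μ hXm hindep hunif i t q
                  _ = (∑' t : ℕ, μ (Dset X i t)) * β := ENNReal.tsum_mul_right
                  _ ≤ 1 * β :=
                      mul_le_mul_left (tsum_Dset_le X μ hXm i) β
                  _ = β := one_mul β
            _ = (n : ℝ≥0∞) * β := by
                rw [Finset.sum_const, Nat.card_Icc]
                simp [nsmul_eq_mul]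
    _ = (n + 1 : ℝ≥0∞) * β := by ring


/-- The real-valued lower bound on the probability of `FEvent`. -/
lemma main_bound (hm : 1 ≤ m) (hXm : ∀ i, Measurable (X i))
    (hindep : iIndepFun X μ)
    (hunif : ∀ i (a : Fin m), μ {ω | X i ω = a} = (m : ℝ≥0∞)⁻¹)
    (n k : ℕ) (hk : 1 ≤ k) :
    1 - (n + 1 : ℝ) * (1 - ((m : ℝ)⁻¹) ^ m) ^ ((k - 1) / m + 1)
      ≤ (μ (FEvent X n k)).toReal := by
  set q : ℕ := (k - 1) / m + 1 with hq
  set B : ℝ≥0∞ := (n + 1 : ℝ≥0∞) * (1 - ((m : ℝ≥0∞)⁻¹) ^ m) ^ q with hB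
  have hp1le : ((m : ℝ≥0∞)⁻¹) ^ m ≤ 1 := by
    apply pow_le_one'
    exact ENNReal.inv_le_one.mpr (by exact_mod_cast hm)
  have hBne : B ≠ ⊤ := by
    apply ENNReal.mul_ne_top
    · exact ENNReal.add_ne_top.mpr ⟨ENNReal.natCast_ne_top n, ENNReal.one_ne_top⟩
    · exact ne_top_of_le_ne_top ENNReal.one_ne_top
        (pow_le_one' tsub_le_self q)
  have hBtoReal : B.toReal = (n + 1 : ℝ) * (1 - ((m : ℝ)⁻¹) ^ m) ^ q := by
    have hsub : ((1 : ℝ≥0∞) - (↑m)⁻¹ ^ m).toReal = 1 - ((m : ℝ)⁻¹) ^ m := by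
      rw [ENNReal.toReal_sub_of_le hp1le ENNReal.one_ne_top, ENNReal.toReal_pow,
        ENNReal.toReal_inv]
      simp
    rw [hB, ENNReal.toReal_mul, ENNReal.toReal_pow, hsub]
    congr 1
  have h1 : (1 : ℝ≥0∞) ≤ μ (FEvent X n k) + B := by
    calc (1 : ℝ≥0∞) = μ Set.univ := (measure_univ).symm
      _ = μ (FEvent X n k ∪ (FEvent X n k)ᶜ) := by rw [Set.union_compl_self]
      _ ≤ μ (FEvent X n k) + μ ((FEvent X n k)ᶜ) := measure_union_le _ _
      _ ≤ μ (FEvent X n k) + B :=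
          add_le_add_right (compl_bound X μ hm hXm hindep hunif n k hk) _
  have h2 := ENNReal.toReal_mono
    (ENNReal.add_ne_top.mpr ⟨measure_ne_top μ _, hBne⟩) h1
  rw [ENNReal.toReal_add (measure_ne_top μ _) hBne, ENNReal.toReal_one] at h2
  rw [← hBtoReal]
  linarith

end Meas

end OccAux

end OccAuxSec

/-- `P(ℱ_{n,k}) > 1 - (n+1)·e^{-p₁ k/m}` with `p₁ = m^{-m}`; in particular, for
`k = ⌈(s+1)(m log n)/p₁⌉` with `s > 0` and `n` large, `P(ℱ_{n,k}) > 1 - n^{-s}`. -/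
theorem prob_F_event
    [MeasurableSpace Ω] (μ : Measure Ω) [IsProbabilityMeasure μ]
    (m : ℕ) (hm : 1 ≤ m)
    (X : ℕ → Ω → Fin m) (hXm : ∀ i, Measurable (X i))
    (hindep : iIndepFun X μ)
    (hunif : ∀ i (a : Fin m), μ {ω | X i ω = a} = (m : ℝ≥0∞)⁻¹) :
    (∀ n k : ℕ, 1 ≤ n → 1 ≤ k →
        (μ (FEvent X n k)).toReal
          > 1 - (n + 1 : ℝ) * Real.exp (-((m : ℝ) ^ (-(m : ℤ)) * k / m))) ∧
      ∀ s : ℝ, 0 < s → ∃ N : ℕ, ∀ n ≥ N,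
        (μ (FEvent X n
            ⌈(s + 1) * (m * Real.log n) / (m : ℝ) ^ (-(m : ℤ))⌉₊)).toReal
          > 1 - (n : ℝ) ^ (-s) := by
  have hm0 : (0 : ℝ) < m := by exact_mod_cast hm
  set p1r : ℝ := ((m : ℝ)⁻¹) ^ m with hp1rdef
  have hp1r_pos : 0 < p1r := pow_pos (inv_pos.mpr hm0) m
  have hp1r_le1 : p1r ≤ 1 := by
    apply pow_le_one₀ (inv_nonneg.mpr hm0.le)
    rw [inv_le_one₀ hm0]
    exact_mod_cast hm
  have hzpow : (m : ℝ) ^ (-(m : ℤ)) = p1r := by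
    rw [hp1rdef, zpow_neg, zpow_natCast, inv_pow]
  have h1le : (0 : ℝ) ≤ 1 - p1r := by linarith
  have hmq : ∀ k : ℕ, 1 ≤ k → k ≤ m * ((k - 1) / m + 1) := by
    intro k hk
    have h1 := Nat.div_add_mod (k - 1) m
    have h2 : (k - 1) % m < m := Nat.mod_lt _ (by omega)
    rw [Nat.mul_add, Nat.mul_one]
    omega
  have hexp_gt : 1 - p1r < Real.exp (-p1r) := by
    have := Real.add_one_lt_exp (x := -p1r) (by intro h; rw [neg_eq_zero] at h; linarith)
    linarith
  -- the strict inequality chain, used in part 1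
  have key : ∀ k : ℕ, 1 ≤ k →
      (1 - p1r) ^ ((k - 1) / m + 1) < Real.exp (-(p1r * k / m)) := by
    intro k hk
    set q : ℕ := (k - 1) / m + 1 with hqdef
    have step1 : (1 - p1r) ^ q < (Real.exp (-p1r)) ^ q :=
      pow_lt_pow_left₀ hexp_gt h1le (Nat.succ_ne_zero _)
    have step2 : (Real.exp (-p1r)) ^ q = Real.exp ((q : ℕ) * (-p1r)) :=
      (Real.exp_nat_mul _ q).symm
    have hkq : (k : ℝ) ≤ (m : ℝ) * q := by exact_mod_cast hmq k hk
    have hdiv : (k : ℝ) / m ≤ q := (div_le_iff₀ hm0).mpr (by linarith)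
    have h4 : p1r * ((k : ℝ) / m) ≤ p1r * q :=
      mul_le_mul_of_nonneg_left hdiv hp1r_pos.le
    have h5 : p1r * ((k : ℝ) / m) = p1r * k / m := by ring
    have step3 : Real.exp ((q : ℕ) * (-p1r)) ≤ Real.exp (-(p1r * k / m)) := by
      apply Real.exp_le_exp.mpr
      linarith [h4, h5]
    calc (1 - p1r) ^ q < (Real.exp (-p1r)) ^ q := step1
      _ = Real.exp ((q : ℕ) * (-p1r)) := step2
      _ ≤ Real.exp (-(p1r * k / m)) := step3
  constructor
  · intro n k hn hk
    rw [hzpow]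
    have hmb := OccAux.main_bound X μ hm hXm hindep hunif n k hk
    rw [← hp1rdef] at hmb
    have hlt := key k hk
    have hpos : (0 : ℝ) < (n : ℝ) + 1 := by positivity
    have := mul_lt_mul_of_pos_left hlt hpos
    linarith
  · intro s hs
    set c : ℝ := (1 - p1r) * Real.exp p1r with hcdef
    have hc0 : 0 ≤ c := mul_nonneg h1le (Real.exp_pos _).le
    have hc1 : c < 1 := by
      have h6 := mul_lt_mul_of_pos_right hexp_gt (Real.exp_pos p1r)
      rw [← Real.exp_add, neg_add_cancel, Real.exp_zero] at h6
      linarith [h6]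
    obtain ⟨Q, hQ⟩ : ∃ Q : ℕ, c ^ Q < 1 / 2 :=
      ((tendsto_pow_atTop_nhds_zero_of_lt_one hc0 hc1).eventually
        (gt_mem_nhds (by norm_num : (0 : ℝ) < 1 / 2))).exists
    set E : ℝ := (Q : ℝ) * p1r / (s + 1) with hEdef
    refine ⟨max 2 (⌈Real.exp E⌉₊ + 1), fun n hn => ?_⟩
    have hn2 : 2 ≤ n := le_trans (le_max_left _ _) hn
    have hnR : (2 : ℝ) ≤ (n : ℝ) := by exact_mod_cast hn2
    have hnpos : (0 : ℝ) < n := by linarith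
    have hlog : 0 < Real.log n := Real.log_pos (by linarith)
    have hElog : E ≤ Real.log n := by
      have h2 : (⌈Real.exp E⌉₊ + 1 : ℕ) ≤ n := le_trans (le_max_right _ _) hn
      have h3 : ((⌈Real.exp E⌉₊ : ℝ) + 1) ≤ n := by exact_mod_cast h2
      have h1 : Real.exp E < n := by
        have := Nat.le_ceil (Real.exp E)
        linarith
      exact ((Real.lt_log_iff_exp_lt hnpos).mpr h1).le
    set k : ℕ := ⌈(s + 1) * (m * Real.log n) / (m : ℝ) ^ (-(m : ℤ))⌉₊ with hkdef
    have hxval : (s + 1) * ((m : ℝ) * Real.log n) / (m : ℝ) ^ (-(m : ℤ))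
        = (s + 1) * ((m : ℝ) * Real.log n) / p1r := by rw [hzpow]
    have hxpos : 0 < (s + 1) * ((m : ℝ) * Real.log n) / p1r := by positivity
    have hk1 : 1 ≤ k := by
      rw [hkdef]
      exact Nat.ceil_pos.mpr (hxval ▸ hxpos)
    set q : ℕ := (k - 1) / m + 1 with hqdef
    have hkq : (k : ℝ) ≤ (m : ℝ) * q := by exact_mod_cast hmq k hk1
    have hxk : (s + 1) * ((m : ℝ) * Real.log n) / p1r ≤ k := by
      rw [← hxval, hkdef]
      exact Nat.le_ceil _
    have hq_ge : (s + 1) * Real.log n / p1r ≤ (q : ℝ) := by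
      have h5 : (s + 1) * ((m : ℝ) * Real.log n) / p1r ≤ (m : ℝ) * q := le_trans hxk hkq
      have heq : (s + 1) * ((m : ℝ) * Real.log n) / p1r
          = (m : ℝ) * ((s + 1) * Real.log n / p1r) := by ring
      rw [heq] at h5
      exact le_of_mul_le_mul_left h5 hm0
    have hplog : (s + 1) * Real.log n ≤ p1r * q := by
      rw [div_le_iff₀ hp1r_pos] at hq_ge
      linarith
    have hQq : Q ≤ q := by
      have hcast : (Q : ℝ) ≤ (q : ℝ) := by
        have hEq : (Q : ℝ) = (s + 1) * E / p1r := by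
          rw [hEdef]
          field_simp
        rw [hEq]
        calc (s + 1) * E / p1r ≤ (s + 1) * Real.log n / p1r := by gcongr
          _ ≤ (q : ℝ) := hq_ge
      exact_mod_cast hcast
    have hcq : c ^ q < 1 / 2 :=
      lt_of_le_of_lt (pow_le_pow_of_le_one hc0 hc1.le hQq) hQ
    have hid : (1 - p1r) ^ q = c ^ q * Real.exp (-(p1r * q)) := by
      rw [hcdef, mul_pow, ← Real.exp_nat_mul, mul_assoc, ← Real.exp_add]
      have h7 : (q : ℝ) * p1r + -(p1r * q) = 0 := by ring
      rw [h7, Real.exp_zero, mul_one]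
    have hexpq : Real.exp (-(p1r * q)) ≤ Real.exp (-((s + 1) * Real.log n)) :=
      Real.exp_le_exp.mpr (by linarith)
    have hrpow : Real.exp (-((s + 1) * Real.log n)) = (n : ℝ) ^ (-(s + 1)) := by
      rw [Real.rpow_def_of_pos hnpos]
      congr 1
      ring
    have hnn : (n : ℝ) * (n : ℝ) ^ (-(s + 1)) = (n : ℝ) ^ (-s) := by
      have h8 : (1 : ℝ) + -(s + 1) = -s := by ring
      calc (n : ℝ) * (n : ℝ) ^ (-(s + 1))
          = (n : ℝ) ^ (1 : ℝ) * (n : ℝ) ^ (-(s + 1)) := by rw [Real.rpow_one]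
        _ = (n : ℝ) ^ ((1 : ℝ) + -(s + 1)) := (Real.rpow_add hnpos _ _).symm
        _ = (n : ℝ) ^ (-s) := by rw [h8]
    have hfinal : ((n : ℝ) + 1) * (1 - p1r) ^ q < (n : ℝ) ^ (-s) := by
      have e0 := Real.exp_pos (-((s + 1) * Real.log n))
      calc ((n : ℝ) + 1) * (1 - p1r) ^ q
          = ((n : ℝ) + 1) * (c ^ q * Real.exp (-(p1r * q))) := by rw [hid]
        _ ≤ ((n : ℝ) + 1) * (c ^ q * Real.exp (-((s + 1) * Real.log n))) := by
            gcongr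
        _ < ((n : ℝ) + 1) * ((1 / 2) * Real.exp (-((s + 1) * Real.log n))) := by
            apply mul_lt_mul_of_pos_left _ (by positivity)
            exact mul_lt_mul_of_pos_right hcq e0
        _ ≤ (n : ℝ) * Real.exp (-((s + 1) * Real.log n)) := by nlinarith
        _ = (n : ℝ) ^ (-s) := by rw [hrpow, hnn]
    have hmb := OccAux.main_bound X μ hm hXm hindep hunif n k hk1
    rw [← hp1rdef, ← hqdef] at hmb
    linarith
end
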